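/- arXiv:1004.2673 — 3 statements merged into one kernel-verified Lean document; each statement's English description precedes it below -/
import Mathlib

section
/- Let f : M → N be a smooth map between Riemannian manifolds, x ∈ M, and {e_1,...,e_m} an orthonormal basis of T_x M. For any w ∈ T_{f(x)}N, decomposing w = w^T + w^⊥ into components tangent and normal to df(T_x M), if S_g^o(f)(x) := inf{ e_g(f)(x) g(X,X) - h(df(X),df(X)) : |X|_g = 1 } ≥ 0, then Σ_{i=1}^m h(w, df(e_i))^2 - e_g(f)(x) |w|_h^2 ≤ - S_g^o(f)(x) |w|_h^2, where e_g(f) = (1/2)|df|^2 is the energy density. -/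
open scoped RealInnerProductSpace

/-- (Flat-chart model of a smooth map between Riemannian manifolds: `df = fderiv ℝ f x`.)
Pointwise stress-energy estimate: if `{e i}` is an orthonormal basis of `T_x M`
diagonalizing `f^*h`, `e_g(f)(x) = (1/2) ∑ i ‖df(e i)‖²` is the energy density and
`S⁰(x) = inf { e_g(f)(x) ‖X‖² - ‖df(X)‖² : ‖X‖ = 1 } ≥ 0`, then for every
`w ∈ T_{f(x)} N`, `∑ i ⟪w, df(e i)⟫² - e_g(f)(x) ‖w‖² ≤ -S⁰(x) ‖w‖²`. -/
theorem stress_energy_pointwise_estimate (m n : ℕ)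
    (f : EuclideanSpace ℝ (Fin m) → EuclideanSpace ℝ (Fin n)) (hf : ContDiff ℝ (⊤ : ℕ∞) f)
    (x : EuclideanSpace ℝ (Fin m)) (e : OrthonormalBasis (Fin m) ℝ (EuclideanSpace ℝ (Fin m)))
    (hdiag : ∀ i j, i ≠ j → ⟪fderiv ℝ f x (e i), fderiv ℝ f x (e j)⟫ = 0)
    (eg S0 : ℝ)
    (heg : eg = (1 / 2) * ∑ i, ‖fderiv ℝ f x (e i)‖ ^ 2)
    (hS0 : S0 = sInf {r : ℝ | ∃ X : EuclideanSpace ℝ (Fin m), ‖X‖ = 1 ∧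
        r = eg * ‖X‖ ^ 2 - ‖fderiv ℝ f x X‖ ^ 2})
    (hS0nonneg : 0 ≤ S0) :
    ∀ w : EuclideanSpace ℝ (Fin n),
      (∑ i, ⟪w, fderiv ℝ f x (e i)⟫ ^ 2) - eg * ‖w‖ ^ 2 ≤ -S0 * ‖w‖ ^ 2 := by
  intro w
  classical
  set T := fderiv ℝ f x with hT
  set v : Fin m → EuclideanSpace ℝ (Fin n) := fun i => T (e i) with hv
  -- The set defining S0 is bounded below
  have hBdd : BddBelow {r : ℝ | ∃ X : EuclideanSpace ℝ (Fin m), ‖X‖ = 1 ∧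
      r = eg * ‖X‖ ^ 2 - ‖T X‖ ^ 2} := by
    refine ⟨eg - ‖T‖ ^ 2, ?_⟩
    rintro r ⟨X, hX, rfl⟩
    have h1 : ‖T X‖ ≤ ‖T‖ := by
      calc ‖T X‖ ≤ ‖T‖ * ‖X‖ := T.le_opNorm X
        _ = ‖T‖ := by rw [hX, mul_one]
    have h2 : ‖T X‖ ^ 2 ≤ ‖T‖ ^ 2 := pow_le_pow_left₀ (norm_nonneg _) h1 2
    rw [hX]
    nlinarith
  -- Each diagonal entry is bounded: ‖v i‖² ≤ eg - S0
  have hkey : ∀ i, ‖v i‖ ^ 2 ≤ eg - S0 := by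
    intro i
    have hmem : eg * ‖(e i : EuclideanSpace ℝ (Fin m))‖ ^ 2 - ‖T (e i)‖ ^ 2 ∈
        {r : ℝ | ∃ X : EuclideanSpace ℝ (Fin m), ‖X‖ = 1 ∧
          r = eg * ‖X‖ ^ 2 - ‖T X‖ ^ 2} := ⟨e i, e.orthonormal.1 i, rfl⟩
    have := csInf_le hBdd hmem
    rw [← hS0] at this
    have hei : ‖(e i : EuclideanSpace ℝ (Fin m))‖ = 1 := e.orthonormal.1 i
    rw [hei] at this
    simp only [one_pow, mul_one] at this
    simp only [hv]
    linarith
  -- hence eg - S0 ≥ 0 whenever m ≥ 1, and = 0 when the index set is empty.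
  by_cases hm : m = 0
  · subst hm
    have hegz : eg = 0 := by simp [heg]
    have hSz : S0 = 0 := by
      rw [hS0]
      convert Real.sInf_empty using 2
      ext r
      simp only [Set.mem_setOf_eq, Set.mem_empty_iff_false, iff_false]
      rintro ⟨X, hX, -⟩
      have : X = 0 := Subsingleton.elim X 0
      rw [this, norm_zero] at hX
      norm_num at hX
    simp [hegz, hSz]
  · have hc : 0 ≤ eg - S0 := by
      have i0 : Fin m := ⟨0, Nat.pos_of_ne_zero hm⟩
      have := hkey i0
      nlinarith [sq_nonneg ‖v i0‖]
    -- Bessel for the renormalized orthogonal family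
    set s : Finset (Fin m) := Finset.univ.filter (fun i => v i ≠ 0) with hs
    set u : Fin m → EuclideanSpace ℝ (Fin n) := fun i => ‖v i‖⁻¹ • v i with hu
    have hortho : Orthonormal ℝ (fun i : s => u i) := by
      rw [orthonormal_iff_ite]
      rintro ⟨i, hi⟩ ⟨j, hj⟩
      simp only [hu, real_inner_smul_left, real_inner_smul_right]
      by_cases hij : i = j
      · subst hij
        simp only [Subtype.mk.injEq]
        rw [real_inner_self_eq_norm_sq]
        have hvi : v i ≠ 0 := by simpa [hs] using hi
        have : ‖v i‖ ≠ 0 := norm_ne_zero_iff.mpr hvi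
        field_simp
        simp
      · have : ⟪v i, v j⟫ = 0 := hdiag i j hij
        simp [this, hij, Subtype.mk.injEq]
    have hbessel : ∑ i : s, ⟪u i, w⟫ ^ 2 ≤ ‖w‖ ^ 2 := by
      have := hortho.sum_inner_products_le (s := Finset.univ) w
      simpa [Real.norm_eq_abs, sq_abs] using this
    -- main estimate
    have hmain : ∑ i, ⟪w, v i⟫ ^ 2 ≤ (eg - S0) * ‖w‖ ^ 2 := by
      have hsum : ∑ i, ⟪w, v i⟫ ^ 2 = ∑ i ∈ s, ⟪w, v i⟫ ^ 2 := by
        symm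
        apply Finset.sum_filter_of_ne
        intro i _ hne
        intro hvi
        apply hne
        simp [hvi]
      rw [hsum]
      have hterm : ∀ i ∈ s, ⟪w, v i⟫ ^ 2 ≤ (eg - S0) * ⟪u i, w⟫ ^ 2 := by
        intro i hi
        have hvi : v i ≠ 0 := by simpa [hs] using hi
        have hnv : (0:ℝ) < ‖v i‖ := norm_pos_iff.mpr hvi
        have hiw : ⟪u i, w⟫ = ‖v i‖⁻¹ * ⟪v i, w⟫ := real_inner_smul_left (v i) w ‖v i‖⁻¹
        rw [hiw, mul_pow, real_inner_comm (v i) w]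
        calc ⟪v i, w⟫ ^ 2 = ‖v i‖ ^ 2 * (‖v i‖⁻¹ ^ 2 * ⟪v i, w⟫ ^ 2) := by
              field_simp
          _ ≤ (eg - S0) * (‖v i‖⁻¹ ^ 2 * ⟪v i, w⟫ ^ 2) :=
              mul_le_mul_of_nonneg_right (hkey i) (by positivity)
      calc ∑ i ∈ s, ⟪w, v i⟫ ^ 2 ≤ ∑ i ∈ s, (eg - S0) * ⟪u i, w⟫ ^ 2 :=
            Finset.sum_le_sum hterm
        _ = (eg - S0) * ∑ i ∈ s, ⟪u i, w⟫ ^ 2 := by rw [Finset.mul_sum]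
        _ ≤ (eg - S0) * ‖w‖ ^ 2 := by
            apply mul_le_mul_of_nonneg_left _ hc
            rw [← Finset.sum_attach s (fun i => ⟪u i, w⟫ ^ 2)]
            exact hbessel
    linarith
end

section
/- Let A : R^m → R^n be a linear map, {e_i} an orthonormal basis of R^m diagonalizing A^T A, and set e = (1/2)Σ_i |Ae_i|^2 and s = min_i (e - |Ae_i|^2). Then for every w ∈ R^n: Σ_i <w, Ae_i>^2 - e|w|^2 ≤ -s|w|^2, provided s ≥ 0. -/
open scoped RealInnerProductSpace

/-- Linear-algebra core of the stress-energy estimate: let `A : ℝ^m → ℝ^n` be linear,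
`{e i}` an orthonormal basis diagonalizing `AᵀA`, `e₀ = (1/2) ∑ i ‖A e_i‖²` and
`s = min_i (e₀ - ‖A e_i‖²)`. If `s ≥ 0`, then for every `w`,
`∑ i ⟪w, A e_i⟫² - e₀ ‖w‖² ≤ -s ‖w‖²`. -/
theorem energy_density_linear_estimate (m n : ℕ) (hm : 0 < m)
    (A : EuclideanSpace ℝ (Fin m) →ₗ[ℝ] EuclideanSpace ℝ (Fin n))
    (e : OrthonormalBasis (Fin m) ℝ (EuclideanSpace ℝ (Fin m)))
    (hdiag : ∀ i j, i ≠ j → ⟪A (e i), A (e j)⟫ = 0)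
    (e₀ s : ℝ)
    (he₀ : e₀ = (1 / 2) * ∑ i, ‖A (e i)‖ ^ 2)
    (hs : s = ⨅ i : Fin m, (e₀ - ‖A (e i)‖ ^ 2))
    (hsnonneg : 0 ≤ s) :
    ∀ w : EuclideanSpace ℝ (Fin n),
      (∑ i, ⟪w, A (e i)⟫ ^ 2) - e₀ * ‖w‖ ^ 2 ≤ -s * ‖w‖ ^ 2 := by
  intro w
  classical
  set M : ℝ := e₀ - s with hM
  have hsi : ∀ i : Fin m, ‖A (e i)‖ ^ 2 ≤ M := by
    intro i
    have : s ≤ e₀ - ‖A (e i)‖ ^ 2 := by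
      rw [hs]; exact ciInf_le (Finite.bddBelow_range _) i
    linarith
  have hM0 : 0 ≤ M := by
    obtain ⟨i⟩ := Fin.pos_iff_nonempty.mp hm
    exact le_trans (sq_nonneg _) (hsi i)
  set S : Finset (Fin m) := Finset.univ.filter (fun i => A (e i) ≠ 0) with hS
  set v : S → EuclideanSpace ℝ (Fin n) := fun i => (‖A (e i.1)‖)⁻¹ • A (e i.1) with hv
  have hne : ∀ i : S, A (e i.1) ≠ 0 := by
    intro i; have := i.2; simp only [hS, Finset.mem_filter] at this; exact this.2
  have hon : Orthonormal ℝ v := by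
    constructor
    · intro i
      rw [hv]
      simp only [norm_smul, norm_inv, norm_norm]
      field_simp [norm_ne_zero_iff.mpr (hne i)]
    · intro i j hij
      have h1 : (i : Fin m) ≠ (j : Fin m) := fun h => hij (Subtype.ext h)
      simp only [hv, real_inner_smul_left, real_inner_smul_right, hdiag _ _ h1, mul_zero]
  have key : ∀ i : S, ⟪w, A (e i.1)⟫ ^ 2 = ‖A (e i.1)‖ ^ 2 * ⟪v i, w⟫ ^ 2 := by
    intro i
    have hn : ‖A (e i.1)‖ ≠ 0 := norm_ne_zero_iff.mpr (hne i)
    rw [hv]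
    simp only [real_inner_smul_left]
    rw [real_inner_comm]
    field_simp
  have bessel : ∑ i : S, ⟪v i, w⟫ ^ 2 ≤ ‖w‖ ^ 2 := by
    have h := hon.sum_inner_products_le (s := Finset.univ) w
    simpa [Real.norm_eq_abs, sq_abs] using h
  have step1 : (∑ i, ⟪w, A (e i)⟫ ^ 2) = ∑ i ∈ S, ⟪w, A (e i)⟫ ^ 2 := by
    symm
    apply Finset.sum_subset (Finset.subset_univ S)
    intro x _ hx
    have : A (e x) = 0 := by
      by_contra h
      exact hx (by simp [hS, h])
    simp [this]
  have step2 : (∑ i ∈ S, ⟪w, A (e i)⟫ ^ 2) ≤ M * ‖w‖ ^ 2 := by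
    calc ∑ i ∈ S, ⟪w, A (e i)⟫ ^ 2
        = ∑ i : S, ⟪w, A (e i.1)⟫ ^ 2 := (Finset.sum_attach S _).symm
      _ = ∑ i : S, ‖A (e i.1)‖ ^ 2 * ⟪v i, w⟫ ^ 2 := Finset.sum_congr rfl (fun i _ => key i)
      _ ≤ ∑ i : S, M * ⟪v i, w⟫ ^ 2 := by
          apply Finset.sum_le_sum
          intro i _
          exact mul_le_mul_of_nonneg_right (hsi i.1) (sq_nonneg _)
      _ = M * ∑ i : S, ⟪v i, w⟫ ^ 2 := by rw [Finset.mul_sum]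
      _ ≤ M * ‖w‖ ^ 2 := mul_le_mul_of_nonneg_left bessel hM0
  have := step1 ▸ step2
  nlinarith [this]
end

section
/- Let (N,h) be a compact Riemannian manifold whose heat kernel K satisfies K(x,y,t) = Ξ(ρ(x,y),t) for some function Ξ (i.e., N is strongly harmonic), where ρ is the Riemannian distance. Then for each eigenvalue λ_α of the Laplacian with orthonormal eigenbasis {φ_i^α}_{i=1}^{N_α}, there exists a function Ξ_α : R_+ → R with Σ_{i=1}^{N_α} φ_i^α(x) φ_i^α(y) = Ξ_α(ρ(x,y)) for all x, y ∈ N. -/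
set_option maxHeartbeats 1000000

open Filter Topology

lemma exp_coeff_zero (lam : ℕ → ℝ) (hmono : StrictMono lam) (c : ℕ → ℝ)
    (hsum : ∀ t : ℝ, 0 < t → Summable fun β => Real.exp (-lam β * t) * c β)
    (hzero : ∀ t : ℝ, 0 < t → ∑' β, Real.exp (-lam β * t) * c β = 0) :
    ∀ α, c α = 0 := by
  intro α
  induction α using Nat.strong_induction_on with
  | _ α IH =>
  -- absolute summability at t = 1, shifted
  have hs1 : Summable fun β => |Real.exp (-lam β * 1) * c β| :=
    (summable_abs_iff).2 (hsum 1 one_pos)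
  have hs1' : Summable fun i => |Real.exp (-lam (i + 1 + α) * 1) * c (i + 1 + α)| :=
    (summable_nat_add_iff 1).2 ((summable_nat_add_iff α).2 hs1)
  set C : ℝ := ∑' i, |Real.exp (-lam (i + 1 + α) * 1) * c (i + 1 + α)| with hC
  -- key estimate
  have key : ∀ t : ℝ, 1 ≤ t →
      |c α| * Real.exp (-lam α * t) ≤ Real.exp (-lam (α + 1) * (t - 1)) * C := by
    intro t ht
    have ht0 : (0:ℝ) < t := lt_of_lt_of_le one_pos ht
    have hsm := hsum t ht0
    have h0 := hzero t ht0
    -- kill the first α terms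
    have hsplit := Summable.sum_add_tsum_nat_add α hsm
    have hfin : (∑ i ∈ Finset.range α, Real.exp (-lam i * t) * c i) = 0 := by
      apply Finset.sum_eq_zero
      intro i hi
      rw [IH i (Finset.mem_range.mp hi), mul_zero]
    rw [h0, hfin, zero_add] at hsplit
    have hsm' : Summable fun i => Real.exp (-lam (i + α) * t) * c (i + α) :=
      (summable_nat_add_iff α).2 hsm
    have hsplit2 := Summable.sum_add_tsum_nat_add 1 hsm'
    rw [hsplit] at hsplit2
    simp only [Finset.range_one, Finset.sum_singleton, Nat.zero_add] at hsplit2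
    -- so exp(-lam α t) * c α = - tail
    have htail : Real.exp (-lam α * t) * c α
        = -∑' i, Real.exp (-lam (i + 1 + α) * t) * c (i + 1 + α) := by
      linarith [hsplit2]
    have hsm'' : Summable fun i => Real.exp (-lam (i + 1 + α) * t) * c (i + 1 + α) := by
      have := (summable_nat_add_iff 1).2 hsm'
      simpa using this
    have habs : Summable fun i => |Real.exp (-lam (i + 1 + α) * t) * c (i + 1 + α)| :=
      summable_abs_iff.2 hsm''
    have hb : ∀ i, |Real.exp (-lam (i + 1 + α) * t) * c (i + 1 + α)|
        ≤ Real.exp (-lam (α + 1) * (t - 1)) * |Real.exp (-lam (i + 1 + α) * 1) * c (i + 1 + α)| := by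
      intro i
      have hle : lam (α + 1) ≤ lam (i + 1 + α) := by
        apply hmono.monotone
        omega
      rw [abs_mul, abs_mul, abs_of_pos (Real.exp_pos _), abs_of_pos (Real.exp_pos _),
        ← mul_assoc, ← Real.exp_add]
      apply mul_le_mul_of_nonneg_right _ (abs_nonneg _)
      apply Real.exp_le_exp.2
      nlinarith [hle, ht]
    calc |c α| * Real.exp (-lam α * t)
        = |Real.exp (-lam α * t) * c α| := by
          rw [abs_mul, abs_of_pos (Real.exp_pos _), mul_comm]
      _ = |∑' i, Real.exp (-lam (i + 1 + α) * t) * c (i + 1 + α)| := by rw [htail, abs_neg]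
      _ ≤ ∑' i, |Real.exp (-lam (i + 1 + α) * t) * c (i + 1 + α)| := by
          have habs' : Summable fun i => ‖Real.exp (-lam (i + 1 + α) * t) * c (i + 1 + α)‖ := by
            simp only [Real.norm_eq_abs]; exact habs
          have h := norm_tsum_le_tsum_norm habs'
          simp only [Real.norm_eq_abs] at h
          exact h
      _ ≤ ∑' i, Real.exp (-lam (α + 1) * (t - 1)) * |Real.exp (-lam (i + 1 + α) * 1) * c (i + 1 + α)| :=
          Summable.tsum_le_tsum hb habs (hs1'.mul_left (Real.exp (-lam (α + 1) * (t - 1))))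
      _ = Real.exp (-lam (α + 1) * (t - 1)) * C := by
          rw [hC, ← tsum_mul_left]
  -- deduce |c α| ≤ K * exp((lam α - lam (α+1)) t)
  have key2 : ∀ t : ℝ, 1 ≤ t →
      |c α| ≤ (Real.exp (lam (α + 1)) * C) * Real.exp (-((lam (α + 1) - lam α) * t)) := by
    intro t ht
    have h := key t ht
    have he : (0:ℝ) < Real.exp (-lam α * t) := Real.exp_pos _
    have h2 : |c α| ≤ Real.exp (-lam (α + 1) * (t - 1)) * C / Real.exp (-lam α * t) :=
      (le_div_iff₀ he).2 h
    calc |c α| ≤ Real.exp (-lam (α + 1) * (t - 1)) * C / Real.exp (-lam α * t) := h2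
      _ = Real.exp (-lam (α + 1) * (t - 1) + lam α * t) * C := by
          rw [div_eq_mul_inv, ← Real.exp_neg, mul_right_comm, ← Real.exp_add]
          congr 2
          ring
      _ = (Real.exp (lam (α + 1)) * C) * Real.exp (-((lam (α + 1) - lam α) * t)) := by
          rw [show -lam (α + 1) * (t - 1) + lam α * t
              = lam (α + 1) + -((lam (α + 1) - lam α) * t) by ring, Real.exp_add]
          ring
  -- limit as t → ∞
  have hd : 0 < lam (α + 1) - lam α := sub_pos.2 (hmono (Nat.lt_succ_self α))
  have hlim : Tendsto (fun t : ℝ =>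
      (Real.exp (lam (α + 1)) * C) * Real.exp (-((lam (α + 1) - lam α) * t))) atTop (𝓝 0) := by
    have h1 : Tendsto (fun t : ℝ => (lam (α + 1) - lam α) * t) atTop atTop :=
      tendsto_id.const_mul_atTop hd
    have h2 : Tendsto (fun t : ℝ => Real.exp (-((lam (α + 1) - lam α) * t))) atTop (𝓝 0) :=
      Real.tendsto_exp_neg_atTop_nhds_zero.comp h1
    simpa using h2.const_mul (Real.exp (lam (α + 1)) * C)
  have : |c α| ≤ 0 := ge_of_tendsto hlim (eventually_atTop.2 ⟨1, key2⟩)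
  exact abs_nonpos_iff.mp this

/-- If the heat kernel `K (x, y, t) = ∑' α, exp (-λ_α t) * P_α (x, y)` of a compact
Riemannian manifold (with distinct eigenvalues `λ_α` and spectral projection kernels
`P_α`) is a function of the Riemannian distance `ρ` alone (strong harmonicity), then
each spectral projection kernel is a function of the distance: for every `α` there
is `Ξ_α : ℝ → ℝ` with `P_α (x, y) = Ξ_α (ρ x y)` for all `x, y`. -/
theorem spectral_kernels_radial_of_heat_kernel_radial
    {X : Type*} (ρ : X → X → ℝ)
    (lam : ℕ → ℝ) (hmono : StrictMono lam)
    (P : ℕ → X → X → ℝ)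
    (hsum : ∀ x y, ∀ t : ℝ, 0 < t → Summable (fun α => Real.exp (-lam α * t) * P α x y))
    (Ξ : ℝ → ℝ → ℝ)
    (hrad : ∀ x y, ∀ t : ℝ, 0 < t →
      (∑' α, Real.exp (-lam α * t) * P α x y) = Ξ (ρ x y) t) :
    ∀ α, ∃ Ξα : ℝ → ℝ, ∀ x y, P α x y = Ξα (ρ x y) := by
  classical
  intro α
  refine ⟨fun r => if h : ∃ p : X × X, ρ p.1 p.2 = r then P α h.choose.1 h.choose.2 else 0, ?_⟩
  intro x y
  have hex : ∃ p : X × X, ρ p.1 p.2 = ρ x y := ⟨(x, y), rfl⟩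
  simp only [dif_pos hex]
  set x0 := hex.choose.1
  set y0 := hex.choose.2
  have hρ : ρ x0 y0 = ρ x y := hex.choose_spec
  have hz := exp_coeff_zero lam hmono (fun β => P β x y - P β x0 y0)
    (fun t ht => by
      simpa [mul_sub] using ((hsum x y t ht).sub (hsum x0 y0 t ht)))
    (fun t ht => by
      have h1 := hrad x y t ht
      have h2 := hrad x0 y0 t ht
      rw [hρ] at h2
      have := (Summable.tsum_sub (hsum x y t ht) (hsum x0 y0 t ht)).symm
      simp only [mul_sub]
      rw [← this, h1, h2, sub_self]) α
  linarith [hz]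
end
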